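/- arXiv:2509.20316 — 2 statements merged into one kernel-verified Lean document; each statement's English description precedes it below -/
import Mathlib

section
/- For every m ≥ 0, the Schur polynomial A_m agrees with the Rogers–Ramanujan series G through degree m−1: viewing both as elements of the formal power series ring ℤ⟦q⟧, one has G(q) − A_m(q) ∈ q^m·ℤ⟦q⟧, i.e. the coefficient of q^j in A_m equals the coefficient of q^j in G for all 0 ≤ j < m. -/
/-! For `n ≤ r` one has `[r choose n]_q = (1 - q^{r-n+1}) ⋯ (1 - q^r) / (q;q)_n`, which is
`1 / (q;q)_n` modulo `q^{r-n+1}`. Hence the `n`-th term `q^{n²} [m-n choose n]_q` of `A_m`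
agrees with the `n`-th term `q^{n²} / (q;q)_n` of `G` modulo `q^{n² + m - 2n + 1}`, a multiple
of `q^m` because `(n - 1)² ≥ 0`; when `2n > m` the binomial vanishes and `q^{n²}` is already a
multiple of `q^m`. Summing over `n ≤ m` compares `A_m` with the partial sum of `G`, whose
remaining terms are multiples of `q^{(m+1)²}`. -/

noncomputable section

open PowerSeries

/-- `(q;q)_n = ∏_{j=1}^n (1 - q^j)` in `ℤ⟦q⟧`; its constant term is `1`, so it is
invertible in `ℤ⟦q⟧`. -/
def qqPoch (n : ℕ) : PowerSeries ℤ :=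
  ∏ j ∈ Finset.range n, (1 - (PowerSeries.X : PowerSeries ℤ) ^ (j + 1))

/-- The Gaussian binomial coefficient `[r choose n]_q = (q;q)_r/((q;q)_n (q;q)_{r-n})`
for `0 ≤ n ≤ r`, and `0` otherwise. -/
def qBinom (r n : ℕ) : PowerSeries ℤ :=
  if n ≤ r then qqPoch r * PowerSeries.invOfUnit (qqPoch n * qqPoch (r - n)) 1 else 0

/-- The Schur polynomial `A_m(q) = Σ_{n≥0} q^{n²} [m−n choose n]_q`. -/
def schurA (m : ℕ) : PowerSeries ℤ :=
  ∑ n ∈ Finset.range (m + 1), (PowerSeries.X : PowerSeries ℤ) ^ (n ^ 2) * qBinom (m - n) n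

/-- The Rogers–Ramanujan series `G(q) = Σ_{n≥0} q^{n²}/(q;q)_n ∈ ℤ⟦q⟧`, defined
coefficientwise: the coefficient of `q^j` only involves the terms with `n² ≤ j`,
so the partial sum over `n ≤ j` determines it. -/
def RRGseries : PowerSeries ℤ :=
  PowerSeries.mk fun j => PowerSeries.coeff j
    (∑ n ∈ Finset.range (j + 1),
      (PowerSeries.X : PowerSeries ℤ) ^ (n ^ 2) * PowerSeries.invOfUnit (qqPoch n) 1)

section PowerSeriesLemmas

variable {R : Type*} [CommRing R]

lemma dvd_prod_sub_one_of_forall_dvd_sub_one {ι : Type*} {d : R} {s : Finset ι} {f : ι → R}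
    (h : ∀ i ∈ s, d ∣ f i - 1) : d ∣ ∏ i ∈ s, f i - 1 :=
  Finset.prod_induction f (fun x => d ∣ x - 1)
    (fun x y hx hy => by
      rw [show x * y - 1 = (x - 1) * y + (y - 1) by ring]
      exact dvd_add (hx.mul_right y) hy)
    (by simp) h

lemma PowerSeries.X_pow_dvd_prod_one_sub_X_pow_sub_one {k : ℕ} {s : Finset ℕ}
    (h : ∀ j ∈ s, k ≤ j + 1) : (X : R⟦X⟧) ^ k ∣ ∏ j ∈ s, (1 - X ^ (j + 1)) - 1 :=
  dvd_prod_sub_one_of_forall_dvd_sub_one fun j hj => by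
    simpa using (pow_dvd_pow X (h j hj)).neg_right

end PowerSeriesLemmas

@[simp]
lemma constantCoeff_qqPoch (n : ℕ) : constantCoeff (qqPoch n) = 1 := by
  simp [qqPoch, map_prod]

lemma qqPoch_mul_invOfUnit (n : ℕ) : qqPoch n * invOfUnit (qqPoch n) 1 = 1 :=
  mul_invOfUnit _ 1 (by simp)

lemma isUnit_qqPoch (n : ℕ) : IsUnit (qqPoch n) :=
  IsUnit.of_mul_eq_one _ (qqPoch_mul_invOfUnit n)

lemma qqPoch_eq_mul_prod_Ico {k r : ℕ} (h : k ≤ r) :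
    qqPoch r = qqPoch k * ∏ j ∈ Finset.Ico k r, (1 - (X : ℤ⟦X⟧) ^ (j + 1)) := by
  simp only [qqPoch, Finset.range_eq_Ico]
  exact (Finset.prod_Ico_consecutive _ k.zero_le h).symm

lemma qBinom_mul_qqPoch_mul_qqPoch {r n : ℕ} (h : n ≤ r) :
    qBinom r n * (qqPoch n * qqPoch (r - n)) = qqPoch r := by
  rw [qBinom, if_pos h, mul_assoc, invOfUnit_mul _ 1 (by simp), mul_one]

lemma qBinom_eq_prod_Ico_mul_invOfUnit {r n : ℕ} (h : n ≤ r) :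
    qBinom r n = (∏ j ∈ Finset.Ico (r - n) r, (1 - (X : ℤ⟦X⟧) ^ (j + 1))) *
      invOfUnit (qqPoch n) 1 := by
  refine ((isUnit_qqPoch n).mul (isUnit_qqPoch (r - n))).mul_right_cancel ?_
  rw [qBinom_mul_qqPoch_mul_qqPoch h, qqPoch_eq_mul_prod_Ico (r.sub_le n)]
  linear_combination -(∏ j ∈ Finset.Ico (r - n) r, (1 - (X : ℤ⟦X⟧) ^ (j + 1))) *
    qqPoch (r - n) * qqPoch_mul_invOfUnit n

lemma X_pow_dvd_qBinom_sub_invOfUnit {r n : ℕ} (h : n ≤ r) :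
    (X : ℤ⟦X⟧) ^ (r - n + 1) ∣ qBinom r n - invOfUnit (qqPoch n) 1 := by
  rw [qBinom_eq_prod_Ico_mul_invOfUnit h, ← sub_one_mul]
  exact (X_pow_dvd_prod_one_sub_X_pow_sub_one fun j hj => by
    have := (Finset.mem_Ico.mp hj).1; omega).mul_right _

lemma X_pow_dvd_X_pow_sq_mul_qBinom_sub_invOfUnit (m n : ℕ) :
    (X : ℤ⟦X⟧) ^ m ∣ X ^ (n ^ 2) * (qBinom (m - n) n - invOfUnit (qqPoch n) 1) := by
  have : 2 * n ≤ n ^ 2 + 1 := by simpa using two_mul_le_add_sq n 1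
  by_cases h : n ≤ m - n
  · calc (X : ℤ⟦X⟧) ^ m ∣ X ^ (n ^ 2 + (m - n - n + 1)) := pow_dvd_pow X (by omega)
      _ = X ^ (n ^ 2) * X ^ (m - n - n + 1) := pow_add X _ _
      _ ∣ _ := mul_dvd_mul_left _ (X_pow_dvd_qBinom_sub_invOfUnit h)
  · rw [qBinom, if_neg h]
    refine (pow_dvd_pow X ?_).trans (dvd_mul_right _ _)
    omega

def rrPartialSum (N : ℕ) : ℤ⟦X⟧ :=
  ∑ n ∈ Finset.range (N + 1), X ^ (n ^ 2) * invOfUnit (qqPoch n) 1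

lemma coeff_RRGseries (j : ℕ) : coeff j RRGseries = coeff j (rrPartialSum j) :=
  coeff_mk _ _

lemma coeff_rrPartialSum_of_le {j N : ℕ} (h : j ≤ N) :
    coeff j (rrPartialSum N) = coeff j (rrPartialSum j) := by
  simp only [rrPartialSum, map_sum]
  refine (Finset.sum_subset (Finset.range_subset_range.mpr (by omega)) fun n _ hn => ?_).symm
  have : j < n ^ 2 := by
    simp only [Finset.mem_range, not_lt] at hn
    nlinarith
  exact X_pow_dvd_iff.mp (dvd_mul_right _ _) j this

lemma X_pow_succ_dvd_RRGseries_sub_rrPartialSum (N : ℕ) :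
    (X : ℤ⟦X⟧) ^ (N + 1) ∣ RRGseries - rrPartialSum N :=
  X_pow_dvd_iff.mpr fun j hj => by
    rw [map_sub, coeff_RRGseries, coeff_rrPartialSum_of_le (N := N) (by omega), sub_self]

lemma X_pow_dvd_schurA_sub_rrPartialSum (m : ℕ) :
    (X : ℤ⟦X⟧) ^ m ∣ schurA m - rrPartialSum m := by
  rw [schurA, rrPartialSum, ← Finset.sum_sub_distrib]
  exact Finset.dvd_sum fun n _ => by
    rw [← mul_sub]
    exact X_pow_dvd_X_pow_sq_mul_qBinom_sub_invOfUnit m n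

/-- `A_m` agrees with `G` through degree `m−1`:  `G − A_m ∈ q^m ℤ⟦q⟧`, i.e. the
coefficients of `q^j` in `A_m` and in `G` coincide for all `j < m`. -/
theorem schurA_agrees_with_RRG (m : ℕ) :
    (PowerSeries.X : PowerSeries ℤ) ^ m ∣ RRGseries - schurA m ∧
    ∀ j : ℕ, j < m → PowerSeries.coeff j (schurA m) = PowerSeries.coeff j RRGseries := by
  have hG : (X : ℤ⟦X⟧) ^ m ∣ RRGseries - rrPartialSum m :=
    (pow_dvd_pow X m.le_succ).trans (X_pow_succ_dvd_RRGseries_sub_rrPartialSum m)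
  have hGA : (X : ℤ⟦X⟧) ^ m ∣ RRGseries - schurA m := by
    rw [← sub_sub_sub_cancel_right RRGseries (schurA m) (rrPartialSum m)]
    exact dvd_sub hG (X_pow_dvd_schurA_sub_rrPartialSum m)
  refine ⟨hGA, fun j hj => ?_⟩
  have := X_pow_dvd_iff.mp hGA j hj
  rwa [map_sub, sub_eq_zero, eq_comm] at this
end
end

section
/- For every m ≥ 0, the Schur polynomial A_m agrees with the finite product P_m through degree m−1: in the formal power series ring ℤ⟦q⟧ one has A_m(q) − P_m(q) ∈ q^m·ℤ⟦q⟧. -/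
noncomputable section

open PowerSeries

/-- `P_m(q) = ∏_{j=1}^m 1/((1 − q^{5j−4})(1 − q^{5j−1})) ∈ ℤ⟦q⟧` (with the product
reindexed by `j ↦ j+1`, i.e. exponents `5j+1` and `5j+4` for `0 ≤ j < m`); each factor
has constant term `1` and is inverted via `PowerSeries.invOfUnit`. -/
def Pprod (m : ℕ) : PowerSeries ℤ :=
  ∏ j ∈ Finset.range m,
    PowerSeries.invOfUnit
      ((1 - (PowerSeries.X : PowerSeries ℤ) ^ (5 * j + 1)) *
        (1 - (PowerSeries.X : PowerSeries ℤ) ^ (5 * j + 4))) 1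

/-!
Schur's proof of the first Rogers–Ramanujan identity, run modulo `q ^ m`.

Both `A_m` and Schur's alternating sum
`F_m = ∑_j (-1)^j q^{j(5j+1)/2} [m choose ⌊(m - 5j)/2⌋]_q` satisfy
`x_{m+2} = x_{m+1} + q^{m+1} x_m` with `x_0 = x_1 = 1`; for `F_m` the defect of the recurrence
telescopes in `j`. Hence `A_m = F_m`.

Now let `q ^ m = 0`. Then `A_m = A_{7m}`, and in `F_{7m}` every binomial whose coefficient
`q^{j(5j+1)/2}` survives is the inverse of `(q;q)_m`, so `(q;q)_m A_m` is the truncated theta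
series `θ = ∑_j (-1)^j q^{j(5j+1)/2}`. The finite Jacobi triple product
`(q²;q⁵)_N (q³;q⁵)_N = ∑_j (-1)^j q^{j(5j+1)/2} [2N choose N - j]_{q⁵}`, a specialisation of
Cauchy's `q`-binomial theorem, likewise gives `θ = (q²;q⁵)_m (q³;q⁵)_m (q⁵;q⁵)_m`. This is
`(q;q)_{5m} P_m = (q;q)_m P_m`, and `(q;q)_m` is a unit.
-/

open Finset

theorem Finset.sum_Ico_int_sub' {M : Type*} [AddCommGroup M] (f : ℤ → M) {a b : ℤ} (h : a ≤ b) :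
    ∑ j ∈ Ico a b, (f j - f (j + 1)) = f a - f b := by
  induction b, h using Int.leInduction with
  | base => simp
  | succ b hab ih =>
    rw [← insert_Ico_right_eq_Ico_add_one hab, sum_insert (by simp), ih]
    abel

section GaussBinom

variable {R S : Type*} [CommRing R] [CommRing S]

def qPoch (a q : R) (n : ℕ) : R := ∏ j ∈ range n, (1 - a * q ^ j)

theorem qPoch_succ (a q : R) (n : ℕ) : qPoch a q (n + 1) = qPoch a q n * (1 - a * q ^ n) :=
  prod_range_succ _ _

theorem map_qPoch (f : R →+* S) (a q : R) (n : ℕ) : f (qPoch a q n) = qPoch (f a) (f q) n := by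
  simp [qPoch]

theorem qPoch_five_mul (q : R) (n : ℕ) :
    qPoch q q (5 * n) = (∏ j ∈ range n, (1 - q ^ (5 * j + 1)) * (1 - q ^ (5 * j + 4))) *
      (qPoch (q ^ 2) (q ^ 5) n * qPoch (q ^ 3) (q ^ 5) n * qPoch (q ^ 5) (q ^ 5) n) := by
  induction n with
  | zero => simp [qPoch]
  | succ n ih =>
    rw [show 5 * (n + 1) = 5 * n + 4 + 1 by ring]
    simp only [qPoch_succ, prod_range_succ, ih]
    ring

def gaussBinom (q : R) : ℕ → ℕ → R
  | _, 0 => 1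
  | 0, _ + 1 => 0
  | r + 1, n + 1 => gaussBinom q r (n + 1) + q ^ (r - n) * gaussBinom q r n

variable (q : R)

@[simp] theorem gaussBinom_zero_right (r : ℕ) : gaussBinom q r 0 = 1 := by cases r <;> rfl

theorem gaussBinom_succ_succ (r n : ℕ) :
    gaussBinom q (r + 1) (n + 1) = gaussBinom q r (n + 1) + q ^ (r - n) * gaussBinom q r n :=
  rfl

theorem gaussBinom_eq_zero_of_lt {r n : ℕ} (h : r < n) : gaussBinom q r n = 0 := by
  induction r generalizing n with
  | zero => obtain ⟨n, rfl⟩ := Nat.exists_eq_add_of_lt h; rfl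
  | succ r ih =>
    obtain ⟨n, rfl⟩ := Nat.exists_eq_add_of_lt (Nat.zero_lt_of_lt h)
    rw [gaussBinom_succ_succ, ih (by omega), ih (by omega), mul_zero, add_zero]

@[simp] theorem gaussBinom_self (r : ℕ) : gaussBinom q r r = 1 := by
  induction r with
  | zero => rfl
  | succ r ih => simp [gaussBinom_succ_succ, gaussBinom_eq_zero_of_lt q (Nat.lt_succ_self r), ih]

theorem gaussBinom_succ_mul_one_sub_pow (r n : ℕ) :
    gaussBinom q r (n + 1) * (1 - q ^ (n + 1)) = gaussBinom q r n * (1 - q ^ (r - n)) := by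
  induction r generalizing n with
  | zero => cases n <;> simp [gaussBinom_eq_zero_of_lt]
  | succ r ih =>
    cases n with
    | zero =>
      have ih0 := ih 0
      simp only [gaussBinom_succ_succ, gaussBinom_zero_right, Nat.sub_zero] at ih0 ⊢
      linear_combination ih0
    | succ n =>
      rcases Nat.lt_or_ge n r with hn | hn
      · obtain ⟨d, rfl⟩ := Nat.exists_eq_add_of_lt hn
        have ih1 := ih (n + 1)
        have ih2 := ih n
        have pascal1 := gaussBinom_succ_succ q (n + d + 1) (n + 1)
        have pascal2 := gaussBinom_succ_succ q (n + d + 1) n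
        simp only [show n + d + 1 - (n + 1) = d by omega, show n + d + 1 - n = d + 1 by omega,
          show n + d + 1 + 1 - (n + 1) = d + 1 by omega] at ih1 ih2 pascal1 pascal2 ⊢
        linear_combination (1 - q ^ (n + 2)) * pascal1 - (1 - q ^ (d + 1)) * pascal2 + ih1 +
          q ^ (d + 1) * ih2
      · rw [gaussBinom_eq_zero_of_lt q (by omega : r + 1 < n + 1 + 1),
          show r + 1 - (n + 1) = 0 by omega]
        simp

theorem gaussBinom_succ_succ' (r n : ℕ) :
    gaussBinom q (r + 1) (n + 1) = q ^ (n + 1) * gaussBinom q r (n + 1) + gaussBinom q r n := by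
  linear_combination gaussBinom_succ_succ q r n + gaussBinom_succ_mul_one_sub_pow q r n

theorem gaussBinom_mul_qPoch {r n : ℕ} (h : n ≤ r) :
    gaussBinom q r n * qPoch q q n * qPoch q q (r - n) = qPoch q q r := by
  induction r generalizing n with
  | zero => obtain rfl := Nat.le_zero.mp h; simp [qPoch]
  | succ r ih =>
    cases n with
    | zero => simp [qPoch]
    | succ n =>
      obtain rfl | hn := eq_or_lt_of_le (Nat.le_of_succ_le_succ h)
      · simp [qPoch]
      obtain ⟨d, rfl⟩ := Nat.exists_eq_add_of_lt hn
      have ih1 := ih (n := n + 1) (by omega)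
      have ih2 := ih (n := n) (by omega)
      simp only [show n + d + 1 - (n + 1) = d by omega, show n + d + 1 - n = d + 1 by omega,
        show n + d + 1 + 1 - (n + 1) = d + 1 by omega, qPoch_succ] at ih1 ih2 ⊢
      rw [gaussBinom_succ_succ, show n + d + 1 - n = d + 1 by omega]
      linear_combination (1 - q * q ^ d) * ih1 + q ^ (d + 1) * (1 - q * q ^ n) * ih2

theorem map_gaussBinom (f : R →+* S) (r n : ℕ) :
    f (gaussBinom q r n) = gaussBinom (f q) r n := by
  induction r generalizing n with
  | zero => cases n <;> simp [gaussBinom]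
  | succ r ih => cases n <;> simp [gaussBinom_succ_succ, ih]

theorem prod_sub_mul_pow_eq_sum (x y : R) (n : ℕ) :
    ∏ j ∈ range n, (x - y * q ^ j) =
      ∑ k ∈ range (n + 1), (-1) ^ k * q ^ k.choose 2 * y ^ k * x ^ (n - k) * gaussBinom q n k := by
  induction n with
  | zero => simp
  | succ n ih =>
    set t : ℕ → ℕ → R :=
      fun n k ↦ (-1) ^ k * q ^ k.choose 2 * y ^ k * x ^ (n - k) * gaussBinom q n k
    have step : ∀ k ∈ range (n + 1), t (n + 1) (k + 1) = x * t n (k + 1) - y * q ^ n * t n k := by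
      intro k hk
      obtain ⟨d, rfl⟩ := Nat.exists_eq_add_of_le (Nat.lt_succ_iff.mp (mem_range.mp hk))
      simp only [t, Nat.choose_succ_succ, Nat.choose_one_right, gaussBinom_succ_succ,
        show k + d + 1 - (k + 1) = d by omega, show k + d - k = d by omega, pow_add]
      cases d with
      | zero =>
        rw [add_zero, gaussBinom_eq_zero_of_lt q (Nat.lt_succ_self k)]
        ring
      | succ d =>
        rw [show k + (d + 1) - (k + 1) = d by omega]
        ring
    have top : t n (n + 1) = 0 := by simp [t, gaussBinom_eq_zero_of_lt]
    rw [prod_range_succ, ih, sum_range_succ' _ (n + 1), sum_congr rfl step, sum_sub_distrib,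
      ← mul_sum, ← mul_sum, sum_range_succ (fun k ↦ t n (k + 1)), top, add_zero,
      sum_range_succ' (t n)]
    simp only [t, pow_zero, Nat.choose_zero_succ, Nat.sub_zero, gaussBinom_zero_right]
    ring

theorem pow_mul_gaussBinom_congr {a b m k : ℕ} (h : k ≤ m → a = b) :
    q ^ a * gaussBinom q m k = q ^ b * gaussBinom q m k := by
  rcases le_or_gt k m with hk | hk
  · rw [h hk]
  · simp [gaussBinom_eq_zero_of_lt q hk]

theorem gaussBinom_add_two_succ (m k : ℕ) :
    gaussBinom q (m + 2) (k + 1) = gaussBinom q (m + 1) k + q ^ (m + 1) * gaussBinom q m k +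
      q ^ (k + 1) * gaussBinom q m (k + 1) := by
  have hexp := pow_mul_gaussBinom_congr q (a := k + 1 + (m - k)) (b := m + 1) (m := m) (k := k)
    (by omega)
  rw [pow_add] at hexp
  linear_combination gaussBinom_succ_succ' q (m + 1) k +
    q ^ (k + 1) * gaussBinom_succ_succ q m k + hexp

theorem gaussBinom_add_two_add_two (m k : ℕ) :
    gaussBinom q (m + 2) (k + 2) = gaussBinom q (m + 1) (k + 2) +
      q ^ (m + 1) * gaussBinom q m (k + 1) + q ^ (m - k) * gaussBinom q m k := by
  have hexp := pow_mul_gaussBinom_congr q (a := m - k + (k + 1)) (b := m + 1) (m := m)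
    (k := k + 1) (by omega)
  have pascal := gaussBinom_succ_succ q (m + 1) (k + 1)
  rw [pow_add] at hexp
  rw [Nat.add_sub_add_right] at pascal
  linear_combination pascal + q ^ (m - k) * gaussBinom_succ_succ' q m k + hexp

end GaussBinom

section Nilpotent

variable {S : Type*} [CommRing S] {q : S}

theorem qPoch_eq_of_pow_eq_zero (a : S) {n n' : ℕ} (hq : q ^ n = 0) (h : n ≤ n') :
    qPoch a q n' = qPoch a q n := by
  induction n', h using Nat.le_induction with
  | base => rfl
  | succ n' h ih => rw [qPoch_succ, pow_eq_zero_of_le h hq, mul_zero, sub_zero, mul_one, ih]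

theorem isUnit_qPoch {a : S} (ha : IsNilpotent a) (q : S) (n : ℕ) : IsUnit (qPoch a q n) :=
  IsUnit.prod_iff.mpr fun _ _ ↦ ((Commute.all _ _).isNilpotent_mul_right ha).isUnit_one_sub

theorem gaussBinom_mul_qPoch_eq_one {m n r : ℕ} (hq : q ^ m = 0) (hn : m ≤ n) (hr : n + m ≤ r) :
    gaussBinom q r n * qPoch q q m = 1 := by
  have h := gaussBinom_mul_qPoch q (show n ≤ r by omega)
  rw [qPoch_eq_of_pow_eq_zero q hq hn, qPoch_eq_of_pow_eq_zero q hq (show m ≤ r - n by omega),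
    qPoch_eq_of_pow_eq_zero q hq (show m ≤ r by omega)] at h
  apply (isUnit_qPoch ⟨m, hq⟩ q m).mul_left_cancel
  linear_combination h

end Nilpotent

def thetaExp (j : ℤ) : ℕ := (j * (5 * j + 1) / 2).toNat

theorem two_mul_thetaExp (j : ℤ) : 2 * (thetaExp j : ℤ) = j * (5 * j + 1) := by
  have heven : 2 ∣ j * (5 * j + 1) := by
    rw [show j * (5 * j + 1) = 4 * j ^ 2 + j * (j + 1) by ring]
    exact dvd_add (dvd_mul_of_dvd_left (by norm_num) _) (Int.even_mul_succ_self j).two_dvd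
  have hnonneg : 0 ≤ j * (5 * j + 1) := by nlinarith [sq_nonneg j]
  unfold thetaExp
  omega

theorem thetaExp_add_one (j : ℤ) : (thetaExp (j + 1) : ℤ) = thetaExp j + 5 * j + 3 := by
  linarith [two_mul_thetaExp j, two_mul_thetaExp (j + 1)]

theorem abs_lt_of_thetaExp_lt {j : ℤ} {m : ℕ} (h : thetaExp j < m) : |j| < m := by
  have := two_mul_thetaExp j
  rw [abs_lt]
  constructor <;> nlinarith

section Schur

variable {R S : Type*} [CommRing R] [CommRing S] (q : R)

def schurPoly (m : ℕ) : R := ∑ n ∈ range (m + 1), q ^ (n ^ 2) * gaussBinom q (m - n) n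

theorem map_schurPoly (f : R →+* S) (m : ℕ) : f (schurPoly q m) = schurPoly (f q) m := by
  simp [schurPoly, map_gaussBinom]

theorem schurPoly_eq_sum_range {m K : ℕ} (hK : m + 1 ≤ K) :
    schurPoly q m = ∑ n ∈ range K, q ^ (n ^ 2) * gaussBinom q (m - n) n := by
  refine sum_subset (range_subset_range.2 hK) fun n _ hn ↦ ?_
  rw [gaussBinom_eq_zero_of_lt q (by simp at hn; omega), mul_zero]

theorem schurPoly_add_two (m : ℕ) :
    schurPoly q (m + 2) = schurPoly q (m + 1) + q ^ (m + 1) * schurPoly q m := by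
  have step : ∀ k ∈ range (m + 2),
      q ^ ((k + 1) ^ 2) * gaussBinom q (m + 2 - (k + 1)) (k + 1) =
        q ^ ((k + 1) ^ 2) * gaussBinom q (m + 1 - (k + 1)) (k + 1) +
          q ^ (m + 1) * (q ^ (k ^ 2) * gaussBinom q (m - k) k) := by
    intro k _
    rcases le_or_gt (2 * k) m with hk | hk
    · obtain ⟨d, rfl⟩ := Nat.exists_eq_add_of_le hk
      rw [show 2 * k + d + 2 - (k + 1) = k + d + 1 by omega,
        show 2 * k + d + 1 - (k + 1) = k + d by omega, show 2 * k + d - k = k + d by omega,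
        gaussBinom_succ_succ, show k + d - k = d by omega]
      ring
    · rw [gaussBinom_eq_zero_of_lt q (show m + 2 - (k + 1) < k + 1 by omega),
        gaussBinom_eq_zero_of_lt q (show m + 1 - (k + 1) < k + 1 by omega),
        gaussBinom_eq_zero_of_lt q (show m - k < k by omega)]
      ring
  rw [schurPoly_eq_sum_range q (K := m + 3) le_rfl,
    schurPoly_eq_sum_range q (K := m + 3) (by omega),
    schurPoly_eq_sum_range q (K := m + 2) (by omega), sum_range_succ' _ (m + 2),
    sum_range_succ' _ (m + 2), sum_congr rfl step, sum_add_distrib, mul_sum]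
  simp only [Nat.sub_zero, gaussBinom_zero_right]
  ring

theorem schurPoly_eq_of_pow_eq_zero {m M : ℕ} (hm : 0 < m) (hq : q ^ m = 0) (hM : m ≤ M) :
    schurPoly q M = schurPoly q m := by
  induction M, hM using Nat.le_induction with
  | base => rfl
  | succ M hM ih =>
    obtain ⟨k, rfl⟩ := Nat.exists_eq_add_of_lt (Nat.lt_of_lt_of_le hm hM)
    rw [schurPoly_add_two, pow_eq_zero_of_le (by omega) hq, zero_mul, add_zero, ih]

/-- The guard `5 * j ≤ m` is needed because `Int.toNat` sends a negative lower index to `0`. -/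
def schurTerm (m : ℕ) (j : ℤ) : R :=
  if 5 * j ≤ m then
    j.negOnePow * q ^ thetaExp j * gaussBinom q m (((m : ℤ) - 5 * j) / 2).toNat
  else 0

def schurTelescope (m : ℕ) (j : ℤ) : R :=
  if 5 * j ≤ m + 2 ∧ ((m : ℤ) + 2 - 5 * j) % 2 = 0 then
    j.negOnePow * q ^ thetaExp j *
      (q ^ (((m : ℤ) + 2 - 5 * j) / 2).toNat * gaussBinom q m (((m : ℤ) + 2 - 5 * j) / 2).toNat)
  else 0

variable {q}

theorem schurTerm_of_eq {m n : ℕ} {j : ℤ} (h : ((m : ℤ) - 5 * j) / 2 = n) :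
    schurTerm q m j = j.negOnePow * q ^ thetaExp j * gaussBinom q m n := by
  rw [schurTerm, if_pos (by omega), h, Int.toNat_natCast]

theorem schurTerm_of_lt {m : ℕ} {j : ℤ} (h : (m : ℤ) < 5 * j) : schurTerm q m j = 0 :=
  if_neg (by omega)

theorem schurTelescope_of_eq {m n : ℕ} {j : ℤ} (h : (m : ℤ) + 2 - 5 * j = 2 * n) :
    schurTelescope q m j = j.negOnePow * q ^ thetaExp j * (q ^ n * gaussBinom q m n) := by
  rw [schurTelescope, if_pos (by omega), show ((m : ℤ) + 2 - 5 * j) / 2 = n by omega,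
    Int.toNat_natCast]

theorem schurTelescope_of_odd {m : ℕ} {j : ℤ}
    (h : (m : ℤ) + 2 < 5 * j ∨ ((m : ℤ) + 2 - 5 * j) % 2 = 1) : schurTelescope q m j = 0 :=
  if_neg (by omega)

theorem schurTerm_sub_sub_even {m n : ℕ} {j : ℤ} (h : (m : ℤ) + 2 - 5 * j = 2 * n) :
    schurTerm q (m + 2) j - schurTerm q (m + 1) j - q ^ (m + 1) * schurTerm q m j =
      schurTelescope q m j - schurTelescope q m (j + 1) := by
  rw [schurTelescope_of_eq h, schurTelescope_of_odd (by omega)]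
  cases n with
  | zero =>
    rw [schurTerm_of_eq (n := 0) (by push_cast; omega), schurTerm_of_lt (by push_cast; omega),
      schurTerm_of_lt (by omega)]
    simp
  | succ k =>
    rw [schurTerm_of_eq (n := k + 1) (by push_cast; omega),
      schurTerm_of_eq (n := k) (by push_cast; omega), schurTerm_of_eq (n := k) (by omega)]
    linear_combination (j.negOnePow * q ^ thetaExp j : R) * gaussBinom_add_two_succ q m k

theorem schurTerm_sub_sub_odd {m n : ℕ} {j : ℤ} (h : (m : ℤ) + 2 - 5 * j = 2 * n + 1) :
    schurTerm q (m + 2) j - schurTerm q (m + 1) j - q ^ (m + 1) * schurTerm q m j =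
      schurTelescope q m j - schurTelescope q m (j + 1) := by
  rw [schurTelescope_of_odd (by omega)]
  match n with
  | 0 =>
    rw [schurTerm_of_eq (n := 0) (by push_cast; omega),
      schurTerm_of_eq (n := 0) (by push_cast; omega), schurTerm_of_lt (by omega),
      schurTelescope_of_odd (by omega)]
    simp
  | 1 =>
    rw [schurTerm_of_eq (n := 1) (by push_cast; omega),
      schurTerm_of_eq (n := 1) (by push_cast; omega), schurTerm_of_eq (n := 0) (by omega),
      schurTelescope_of_odd (by omega)]
    have pascal := gaussBinom_succ_succ q (m + 1) 0
    simp only [Nat.sub_zero, gaussBinom_zero_right] at pascal ⊢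
    linear_combination (j.negOnePow * q ^ thetaExp j : R) * pascal
  | k + 2 =>
    rw [schurTerm_of_eq (n := k + 2) (by push_cast; omega),
      schurTerm_of_eq (n := k + 2) (by push_cast; omega),
      schurTerm_of_eq (n := k + 1) (by omega), schurTelescope_of_eq (n := k) (by omega),
      Int.negOnePow_succ]
    have hexp := pow_mul_gaussBinom_congr q (a := thetaExp j + (m - k))
      (b := thetaExp (j + 1) + k) (m := m) (k := k) (by have := thetaExp_add_one j; omega)
    simp only [pow_add] at hexp
    push_cast
    linear_combination (j.negOnePow * q ^ thetaExp j : R) * gaussBinom_add_two_add_two q m k +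
      (j.negOnePow : R) * hexp

theorem schurTerm_sub_sub (m : ℕ) (j : ℤ) :
    schurTerm q (m + 2) j - schurTerm q (m + 1) j - q ^ (m + 1) * schurTerm q m j =
      schurTelescope q m j - schurTelescope q m (j + 1) := by
  rcases lt_or_ge ((m : ℤ) + 2 - 5 * j) 0 with hneg | hnonneg
  · rw [schurTerm_of_lt (by push_cast; omega), schurTerm_of_lt (by push_cast; omega),
      schurTerm_of_lt (by omega), schurTelescope_of_odd (by omega),
      schurTelescope_of_odd (by omega)]
    simp
  · obtain ⟨n, hn | hn⟩ :
        ∃ n : ℕ, (m : ℤ) + 2 - 5 * j = 2 * n ∨ (m : ℤ) + 2 - 5 * j = 2 * n + 1 :=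
      ⟨(((m : ℤ) + 2 - 5 * j) / 2).toNat, by omega⟩
    exacts [schurTerm_sub_sub_even hn, schurTerm_sub_sub_odd hn]

theorem sum_schurTerm_of_le_one {m : ℕ} (hm : m ≤ 1) (J : ℕ) :
    ∑ j ∈ Icc (-(J : ℤ)) J, schurTerm q m j = 1 := by
  rw [sum_eq_single_of_mem 0 (by simp)]
  · simp [schurTerm_of_eq (m := m) (n := 0) (j := 0) (by omega), thetaExp]
  · intro j _ hj
    rcases lt_or_gt_of_ne hj with hj | hj
    · rw [schurTerm, if_pos (by omega), gaussBinom_eq_zero_of_lt q (by omega), mul_zero]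
    · exact schurTerm_of_lt (by omega)

theorem schurPoly_eq_sum_schurTerm {m J : ℕ} (hJ : m ≤ J) :
    schurPoly q m = ∑ j ∈ Icc (-(J : ℤ)) J, schurTerm q m j := by
  induction m using Nat.twoStepInduction with
  | zero => simp [schurPoly, sum_schurTerm_of_le_one]
  | one => simp [schurPoly, sum_range_succ, sum_schurTerm_of_le_one, gaussBinom_eq_zero_of_lt]
  | more m ih0 ih1 =>
    have hlow : schurTelescope q m (-J) = 0 := by
      obtain ⟨n, hn | hn⟩ :
          ∃ n : ℕ, (m : ℤ) + 2 - 5 * -J = 2 * n ∨ (m : ℤ) + 2 - 5 * -J = 2 * n + 1 :=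
        ⟨(((m : ℤ) + 2 + 5 * J) / 2).toNat, by omega⟩
      · rw [schurTelescope_of_eq hn, gaussBinom_eq_zero_of_lt q (by omega), mul_zero, mul_zero]
      · exact schurTelescope_of_odd (by omega)
    have htelescope : ∑ j ∈ Icc (-(J : ℤ)) J, schurTerm q (m + 2) j -
        ∑ j ∈ Icc (-(J : ℤ)) J, schurTerm q (m + 1) j -
        q ^ (m + 1) * ∑ j ∈ Icc (-(J : ℤ)) J, schurTerm q m j = 0 := by
      rw [mul_sum, ← sum_sub_distrib, ← sum_sub_distrib, ← Ico_add_one_right_eq_Icc,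
        sum_congr rfl fun j _ ↦ schurTerm_sub_sub m j, sum_Ico_int_sub' _ (by omega), hlow,
        schurTelescope_of_odd (by omega), sub_zero]
    rw [schurPoly_add_two, ih1 (by omega), ih0 (by omega)]
    linear_combination -htelescope

theorem schurTerm_mul_qPoch {m M : ℕ} (hq : q ^ m = 0) (hM : 7 * m ≤ M) (j : ℤ) :
    schurTerm q M j * qPoch q q m = j.negOnePow * q ^ thetaExp j := by
  by_cases hj : m ≤ thetaExp j
  · rw [schurTerm]
    split_ifs <;> simp [pow_eq_zero_of_le hj hq]
  · obtain ⟨hj₁, hj₂⟩ := abs_lt.mp (abs_lt_of_thetaExp_lt (not_le.mp hj))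
    rw [schurTerm_of_eq (n := (((M : ℤ) - 5 * j) / 2).toNat) (by omega), mul_assoc,
      gaussBinom_mul_qPoch_eq_one hq (by omega) (by omega), mul_one]

end Schur

section Jacobi

variable {R : Type*} [CommRing R] (q : R)

theorem prod_range_two_mul_sub (N : ℕ) :
    ∏ j ∈ range (2 * N), (q ^ (5 * N + 3) - q ^ 5 * (q ^ 5) ^ j) =
      q ^ (5 * (N + 1).choose 2 + (5 * N + 3) * N) *
        ((-1) ^ N * (qPoch (q ^ 2) (q ^ 5) N * qPoch (q ^ 3) (q ^ 5) N)) := by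
  have hlow : ∀ j ∈ range N, q ^ (5 * N + 3) - q ^ 5 * (q ^ 5) ^ j =
      -(q ^ 5) ^ (j + 1) * (1 - q ^ 3 * (q ^ 5) ^ (N - 1 - j)) := by
    intro j hj
    obtain ⟨d, rfl⟩ := Nat.exists_eq_add_of_lt (mem_range.mp hj)
    rw [show j + d + 1 - 1 - j = d by omega]
    ring
  have hhigh : ∀ j ∈ range N, q ^ (5 * N + 3) - q ^ 5 * (q ^ 5) ^ (N + j) =
      q ^ (5 * N + 3) * (1 - q ^ 2 * (q ^ 5) ^ j) := fun j _ ↦ by ring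
  have hsum : ∑ j ∈ range N, (j + 1) = (N + 1).choose 2 := by
    rw [Nat.choose_two_right, ← sum_range_id, sum_range_succ', add_zero]
  rw [two_mul, prod_range_add, prod_congr rfl hlow, prod_congr rfl hhigh, prod_mul_distrib,
    prod_mul_distrib, prod_range_reflect (fun j ↦ 1 - q ^ 3 * (q ^ 5) ^ j) N, prod_const,
    prod_neg, card_range, ← pow_mul, prod_pow_eq_pow_sum, hsum, qPoch, qPoch]
  ring

theorem five_mul_choose_two_add_eq_thetaExp {N k : ℕ} (hk : k ≤ 2 * N) :
    5 * k.choose 2 + 5 * k + (5 * N + 3) * (2 * N - k) =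
      5 * (N + 1).choose 2 + (5 * N + 3) * N + thetaExp ((N : ℤ) - k) := by
  have hchoose (n : ℕ) : 2 * n.choose 2 + n = n * n := by
    induction n with
    | zero => rfl
    | succ n ih => rw [Nat.choose_succ_succ, Nat.choose_one_right]; nlinarith
  have := two_mul_thetaExp ((N : ℤ) - k)
  have h1 := hchoose k
  have h2 := hchoose (N + 1)
  zify [hk] at h1 h2 ⊢
  nlinarith

/-- Cauchy's `q`-binomial theorem in base `q⁵` with `x = q^(5N+3)` and `y = q⁵`. -/
theorem pow_mul_qPoch_mul_qPoch (N : ℕ) :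
    q ^ (5 * (N + 1).choose 2 + (5 * N + 3) * N) *
        ((-1) ^ N * (qPoch (q ^ 2) (q ^ 5) N * qPoch (q ^ 3) (q ^ 5) N)) =
      q ^ (5 * (N + 1).choose 2 + (5 * N + 3) * N) *
        ∑ k ∈ range (2 * N + 1),
          (-1) ^ k * q ^ thetaExp ((N : ℤ) - k) * gaussBinom (q ^ 5) (2 * N) k := by
  rw [← prod_range_two_mul_sub, prod_sub_mul_pow_eq_sum, mul_sum]
  refine sum_congr rfl fun k hk ↦ ?_
  have hexp := five_mul_choose_two_add_eq_thetaExp (N := N) (k := k) (by simp at hk; omega)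
  calc _ = (-1) ^ k * q ^ (5 * k.choose 2 + 5 * k + (5 * N + 3) * (2 * N - k)) *
        gaussBinom (q ^ 5) (2 * N) k := by ring
    _ = _ := by rw [hexp, pow_add]; ring

def jacobiTerm (N : ℕ) (j : ℤ) : R :=
  j.negOnePow * q ^ thetaExp j * gaussBinom (q ^ 5) (2 * N) ((N : ℤ) - j).toNat

/-- The common factor `q ^ c` of `pow_mul_qPoch_mul_qPoch` is cancelled in `ℤ[X]`, and the
result is then specialised to `X ↦ q`. -/
theorem qPoch_mul_qPoch_eq_sum_jacobiTerm (N : ℕ) :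
    qPoch (q ^ 2) (q ^ 5) N * qPoch (q ^ 3) (q ^ 5) N =
      ∑ j ∈ Icc (-(N : ℤ)) N, jacobiTerm q N j := by
  let x : Polynomial ℤ := Polynomial.X
  suffices h : qPoch (x ^ 2) (x ^ 5) N * qPoch (x ^ 3) (x ^ 5) N =
      ∑ j ∈ Icc (-(N : ℤ)) N, jacobiTerm x N j by
    have := congrArg (Polynomial.eval₂RingHom (Int.castRingHom R) q) h
    simp only [jacobiTerm, map_mul, map_sum, map_pow, map_intCast, map_qPoch,
      map_gaussBinom] at this
    simpa [x, jacobiTerm] using this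
  have h := mul_left_cancel₀ (pow_ne_zero _ Polynomial.X_ne_zero) (pow_mul_qPoch_mul_qPoch x N)
  have hsq : ((-1 : Polynomial ℤ) ^ N) * (-1) ^ N = 1 := by rw [← mul_pow]; simp
  rw [← one_mul (qPoch _ _ N * _), ← hsq, mul_assoc, h, mul_sum]
  refine sum_nbij' (fun k ↦ (N : ℤ) - k) (fun j ↦ ((N : ℤ) - j).toNat) ?_ ?_ ?_ ?_ ?_
  · intro k hk
    simp only [mem_range, mem_Icc] at hk ⊢
    omega
  · intro j hj
    simp only [mem_range, mem_Icc] at hj ⊢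
    omega
  · intro k _
    omega
  · intro j hj
    simp only [mem_Icc] at hj
    omega
  · intro k _
    rw [jacobiTerm, show ((N : ℤ) - ((N : ℤ) - k)).toNat = k by omega, Int.negOnePow_sub,
      Units.val_mul, Int.cast_mul, Int.cast_negOnePow_natCast, Int.cast_negOnePow_natCast]
    ring

variable {q}

theorem jacobiTerm_mul_qPoch {m M : ℕ} (hq : q ^ m = 0) (hM : 2 * m ≤ M) (j : ℤ) :
    jacobiTerm q M j * qPoch (q ^ 5) (q ^ 5) m = j.negOnePow * q ^ thetaExp j := by
  by_cases hj : m ≤ thetaExp j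
  · simp [jacobiTerm, pow_eq_zero_of_le hj hq]
  · obtain ⟨hj₁, hj₂⟩ := abs_lt.mp (abs_lt_of_thetaExp_lt (not_le.mp hj))
    have hq5 : (q ^ 5) ^ m = 0 := by rw [← pow_mul, pow_eq_zero_of_le (by omega) hq]
    rw [jacobiTerm, mul_assoc, gaussBinom_mul_qPoch_eq_one hq5 (by omega) (by omega), mul_one]

end Jacobi

theorem schurPoly_mul_qPoch_of_pow_eq_zero {S : Type*} [CommRing S] {q : S} {m : ℕ} (hm : 0 < m)
    (hq : q ^ m = 0) :
    schurPoly q m * qPoch q q m =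
      qPoch (q ^ 2) (q ^ 5) m * qPoch (q ^ 3) (q ^ 5) m * qPoch (q ^ 5) (q ^ 5) m := by
  have hq5 : (q ^ 5) ^ m = 0 := by rw [← pow_mul, pow_eq_zero_of_le (by omega) hq]
  set M := 7 * m
  calc schurPoly q m * qPoch q q m
      = ∑ j ∈ Icc (-(M : ℤ)) M, schurTerm q M j * qPoch q q m := by
        rw [← schurPoly_eq_of_pow_eq_zero q hm hq (by omega : m ≤ M),
          schurPoly_eq_sum_schurTerm le_rfl, sum_mul]
    _ = ∑ j ∈ Icc (-(M : ℤ)) M, jacobiTerm q M j * qPoch (q ^ 5) (q ^ 5) m := by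
        refine sum_congr rfl fun j _ ↦ ?_
        rw [schurTerm_mul_qPoch hq le_rfl, jacobiTerm_mul_qPoch hq (by omega)]
    _ = qPoch (q ^ 2) (q ^ 5) m * qPoch (q ^ 3) (q ^ 5) m * qPoch (q ^ 5) (q ^ 5) m := by
        rw [← sum_mul, ← qPoch_mul_qPoch_eq_sum_jacobiTerm,
          qPoch_eq_of_pow_eq_zero (q ^ 2) hq5 (by omega),
          qPoch_eq_of_pow_eq_zero (q ^ 3) hq5 (by omega)]

theorem qBinom_eq_gaussBinom (r n : ℕ) : qBinom r n = gaussBinom X r n := by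
  have hqq (k : ℕ) : qqPoch k = qPoch X X k := by simp [qqPoch, qPoch, pow_succ']
  rw [qBinom]
  split_ifs with h
  · simp only [hqq]
    rw [← gaussBinom_mul_qPoch X h, mul_assoc (gaussBinom X r n), mul_assoc,
      PowerSeries.mul_invOfUnit, mul_one]
    simp [qPoch]
  · exact (gaussBinom_eq_zero_of_lt X (not_le.mp h)).symm

theorem schurA_eq_schurPoly (m : ℕ) : schurA m = schurPoly X m := by
  simp [schurA, schurPoly, qBinom_eq_gaussBinom]

theorem Pprod_mul_prod (m : ℕ) :
    Pprod m * ∏ j ∈ range m, (1 - (X : ℤ⟦X⟧) ^ (5 * j + 1)) * (1 - X ^ (5 * j + 4)) = 1 := by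
  rw [Pprod, ← prod_mul_distrib]
  refine prod_eq_one fun j _ ↦ ?_
  rw [mul_comm, PowerSeries.mul_invOfUnit]
  simp

/-- `A_m` agrees with `P_m` through degree `m−1`:  `A_m − P_m ∈ q^m ℤ⟦q⟧`. -/
theorem schurA_agrees_with_Pprod (m : ℕ) :
    (PowerSeries.X : PowerSeries ℤ) ^ m ∣ schurA m - Pprod m := by
  rcases Nat.eq_zero_or_pos m with rfl | hm
  · simp
  set π := Ideal.Quotient.mk (Ideal.span {(X : ℤ⟦X⟧) ^ m})
  have hX : π X ^ m = 0 := by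
    rw [← map_pow, Ideal.Quotient.eq_zero_iff_mem]
    exact Ideal.mem_span_singleton_self _
  have hP := congrArg π (Pprod_mul_prod m)
  simp only [map_mul, map_prod, map_sub, map_one, map_pow] at hP
  rw [← Ideal.mem_span_singleton, ← Ideal.Quotient.eq]
  apply (isUnit_qPoch ⟨m, hX⟩ (π X) m).mul_right_cancel
  rw [schurA_eq_schurPoly, map_schurPoly, schurPoly_mul_qPoch_of_pow_eq_zero hm hX,
    ← qPoch_eq_of_pow_eq_zero (π X) hX (by omega : m ≤ 5 * m), qPoch_five_mul, ← mul_assoc, hP,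
    one_mul]
end
end
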